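/- arXiv:2104.09838 — 2 statements merged into one kernel-verified Lean document; each statement's English description precedes it below -/
import Mathlib

section
/- For any two nonzero vectors u, v ∈ ℝᵖ, the rank-one projection matrices satisfy the perturbation bound ‖P(u) − P(v)‖_F ≤ 4 ‖u − v‖₂ / ‖v‖₂. -/
open Matrix BigOperators Finset

/-- ℓ¹ norm of a vector in ℝᵖ. -/
noncomputable def l1 {p : ℕ} (v : Fin p → ℝ) : ℝ := ∑ k, |v k|

/-- ℓ² norm of a vector in ℝᵖ. -/
noncomputable def l2 {p : ℕ} (v : Fin p → ℝ) : ℝ := Real.sqrt (∑ k, (v k) ^ 2)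

/-- ℓ^∞ norm of a vector in ℝᵖ (the sup norm on `Fin p → ℝ`). -/
noncomputable def linf {p : ℕ} (v : Fin p → ℝ) : ℝ := ‖v‖

/-- The restriction `v_S` of a vector to an index set `S` (zero outside `S`). -/
def vres {p : ℕ} (S : Finset (Fin p)) (v : Fin p → ℝ) : Fin p → ℝ :=
  fun k => if k ∈ S then v k else 0

/-- The CHOMP objective `F(β) = (1/2)‖Lᵀβ − κ‖₂² + μ‖β‖₁`. -/
noncomputable def chompF {p : ℕ} (L : Matrix (Fin p) (Fin p) ℝ) (κ : Fin p → ℝ) (μ : ℝ)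
    (β : Fin p → ℝ) : ℝ :=
  (1 / 2) * (l2 (Lᵀ.mulVec β - κ)) ^ 2 + μ * l1 β

/-- The projection matrix `P(v) = v (vᵀv)⁻¹ vᵀ` associated with a vector `v`
(by the junk-value convention `0⁻¹ = 0` in `ℝ`, this gives `P(0) = 0`). -/
noncomputable def proj {p : ℕ} (v : Fin p → ℝ) : Matrix (Fin p) (Fin p) ℝ :=
  (v ⬝ᵥ v)⁻¹ • Matrix.vecMulVec v v

/-- The Frobenius norm of a matrix. -/
noncomputable def frob {p : ℕ} (A : Matrix (Fin p) (Fin p) ℝ) : ℝ :=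
  Real.sqrt (∑ i, ∑ j, (A i j) ^ 2)

section aux
variable {p : ℕ}

lemma l2_eq_norm (v : Fin p → ℝ) : l2 v = ‖(WithLp.equiv 2 (Fin p → ℝ)).symm v‖ := by
  rw [l2, EuclideanSpace.norm_eq]
  congr 1
  refine Finset.sum_congr rfl fun k _ => ?_
  rw [WithLp.equiv_symm_apply, WithLp.ofLp_toLp, Real.norm_eq_abs, sq_abs]

lemma l2_nonneg (v : Fin p → ℝ) : 0 ≤ l2 v := Real.sqrt_nonneg _

lemma l2_pos {v : Fin p → ℝ} (hv : v ≠ 0) : 0 < l2 v := by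
  rw [l2_eq_norm, norm_pos_iff]
  simpa using hv

lemma l2_smul (c : ℝ) (v : Fin p → ℝ) : l2 (c • v) = |c| * l2 v := by
  rw [l2_eq_norm, l2_eq_norm v]
  have : (WithLp.equiv 2 (Fin p → ℝ)).symm (c • v) = c • (WithLp.equiv 2 (Fin p → ℝ)).symm v := rfl
  rw [this, norm_smul, Real.norm_eq_abs]

lemma l2_add_le (a b : Fin p → ℝ) : l2 (a + b) ≤ l2 a + l2 b := by
  rw [l2_eq_norm, l2_eq_norm, l2_eq_norm]
  exact norm_add_le _ _

lemma abs_l2_sub_l2_le (a b : Fin p → ℝ) : |l2 a - l2 b| ≤ l2 (a - b) := by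
  rw [l2_eq_norm, l2_eq_norm, l2_eq_norm]
  exact abs_norm_sub_norm_le _ _

lemma dot_self_eq (v : Fin p → ℝ) : v ⬝ᵥ v = l2 v ^ 2 := by
  rw [l2, Real.sq_sqrt (by positivity)]
  simp [dotProduct, sq]

lemma frob_eq_norm (A : Matrix (Fin p) (Fin p) ℝ) :
    frob A = ‖(WithLp.equiv 2 (Fin p × Fin p → ℝ)).symm (fun ij => A ij.1 ij.2)‖ := by
  rw [frob, EuclideanSpace.norm_eq, Fintype.sum_prod_type]
  congr 1
  refine Finset.sum_congr rfl fun i _ => Finset.sum_congr rfl fun j _ => ?_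
  rw [WithLp.equiv_symm_apply, WithLp.ofLp_toLp, Real.norm_eq_abs, sq_abs]

lemma frob_add_le (A B : Matrix (Fin p) (Fin p) ℝ) : frob (A + B) ≤ frob A + frob B := by
  rw [frob_eq_norm, frob_eq_norm, frob_eq_norm]
  exact norm_add_le ((WithLp.equiv 2 (Fin p × Fin p → ℝ)).symm (fun ij => A ij.1 ij.2))
    ((WithLp.equiv 2 (Fin p × Fin p → ℝ)).symm (fun ij => B ij.1 ij.2))

lemma frob_vecMulVec (a b : Fin p → ℝ) : frob (vecMulVec a b) = l2 a * l2 b := by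
  rw [frob, l2, l2, ← Real.sqrt_mul (by positivity)]
  congr 1
  rw [Finset.sum_mul_sum]
  refine Finset.sum_congr rfl fun i _ => Finset.sum_congr rfl fun j _ => ?_
  rw [vecMulVec_apply]; ring

end aux

/-- the rank-one projection perturbation bound
`‖P(u) − P(v)‖_F ≤ 4 ‖u − v‖₂ / ‖v‖₂` for nonzero vectors `u, v`. -/
theorem projection_perturbation_bound {p : ℕ}
    (u v : Fin p → ℝ) (hu : u ≠ 0) (hv : v ≠ 0) :
    frob (proj u - proj v) ≤ 4 * l2 (u - v) / l2 v := by
  have ha : 0 < l2 u := l2_pos hu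
  have hb : 0 < l2 v := l2_pos hv
  set x := (l2 u)⁻¹ • u with hx
  set y := (l2 v)⁻¹ • v with hy
  have hxu : proj u = vecMulVec x x := by
    ext i j
    simp only [proj, Matrix.smul_apply, vecMulVec_apply, dot_self_eq, hx, Pi.smul_apply,
      smul_eq_mul]
    rw [sq]
    field_simp
  have hyv : proj v = vecMulVec y y := by
    ext i j
    simp only [proj, Matrix.smul_apply, vecMulVec_apply, dot_self_eq, hy, Pi.smul_apply,
      smul_eq_mul]
    rw [sq]
    field_simp
  have hdecomp : proj u - proj v = vecMulVec x (x - y) + vecMulVec (x - y) y := by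
    rw [hxu, hyv]; ext i j
    simp only [Matrix.sub_apply, Matrix.add_apply, vecMulVec_apply, Pi.sub_apply]
    ring
  have hlx : l2 x = 1 := by
    rw [hx, l2_smul, abs_inv, abs_of_pos ha, inv_mul_cancel₀ ha.ne']
  have hly : l2 y = 1 := by
    rw [hy, l2_smul, abs_inv, abs_of_pos hb, inv_mul_cancel₀ hb.ne']
  have hxy : l2 (x - y) ≤ 2 * l2 (u - v) / l2 v := by
    have h1 : x - y = (l2 v)⁻¹ • (u - v) + ((l2 u)⁻¹ - (l2 v)⁻¹) • u := by
      rw [hx, hy]; ext k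
      simp only [Pi.sub_apply, Pi.add_apply, Pi.smul_apply, smul_eq_mul]
      ring
    have h2 : |(l2 u)⁻¹ - (l2 v)⁻¹| * l2 u ≤ l2 (u - v) / l2 v := by
      have e1 : (l2 u)⁻¹ - (l2 v)⁻¹ = (l2 v - l2 u) / (l2 u * l2 v) := by
        field_simp
      have e2 : |l2 v - l2 u| ≤ l2 (u - v) := by
        rw [abs_sub_comm]
        exact abs_l2_sub_l2_le u v
      rw [e1, abs_div, abs_of_pos (mul_pos ha hb)]
      have e3 : |l2 v - l2 u| / (l2 u * l2 v) * l2 u = |l2 v - l2 u| / l2 v := by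
        field_simp
      rw [e3]
      gcongr
    calc l2 (x - y) ≤ l2 ((l2 v)⁻¹ • (u - v)) + l2 (((l2 u)⁻¹ - (l2 v)⁻¹) • u) := by
          rw [h1]; exact l2_add_le _ _
      _ = (l2 v)⁻¹ * l2 (u - v) + |(l2 u)⁻¹ - (l2 v)⁻¹| * l2 u := by
          rw [l2_smul, l2_smul, abs_inv, abs_of_pos hb]
      _ ≤ l2 (u - v) / l2 v + l2 (u - v) / l2 v := by
          rw [inv_mul_eq_div]
          exact add_le_add le_rfl h2
      _ = 2 * l2 (u - v) / l2 v := by ring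
  calc frob (proj u - proj v)
      = frob (vecMulVec x (x - y) + vecMulVec (x - y) y) := by rw [hdecomp]
    _ ≤ frob (vecMulVec x (x - y)) + frob (vecMulVec (x - y) y) := frob_add_le _ _
    _ = l2 x * l2 (x - y) + l2 (x - y) * l2 y := by rw [frob_vecMulVec, frob_vecMulVec]
    _ = 2 * l2 (x - y) := by rw [hlx, hly]; ring
    _ ≤ 2 * (2 * l2 (u - v) / l2 v) := by linarith
    _ = 4 * l2 (u - v) / l2 v := by ring
end

section
/- Let β, β̂ ∈ ℝᵖ be nonzero vectors and let K ⊆ {1,…,p} be a set of indices such that β̂_k = 0 for every k ∈ K. Then ‖P(β̂) − P(β)‖_F² ≥ 2 ‖β_K‖₂² / ‖β‖₂² − ‖β_K‖₂⁴ / ‖β‖₂⁴. -/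
open Matrix BigOperators Finset

lemma l2_sq {p : ℕ} (v : Fin p → ℝ) : (l2 v) ^ 2 = ∑ k, (v k) ^ 2 := by
  rw [l2, Real.sq_sqrt]
  exact Finset.sum_nonneg fun k _ => sq_nonneg _

lemma sum_sq_pos_of_ne_zero {p : ℕ} {v : Fin p → ℝ} (hv : v ≠ 0) :
    0 < ∑ k, (v k) ^ 2 := by
  rcases Function.ne_iff.mp hv with ⟨k, hk⟩
  have : (0:ℝ) < (v k) ^ 2 := pow_two_pos_of_ne_zero hk
  exact lt_of_lt_of_le this (Finset.single_le_sum (fun i _ => sq_nonneg (v i)) (mem_univ k))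

/-- the lower bound on the squared Frobenius distance between
projection matrices when `βh` vanishes on an index set `K`:
`‖P(βh) − P(β)‖_F² ≥ 2‖β_K‖₂²/‖β‖₂² − ‖β_K‖₂⁴/‖β‖₂⁴`. -/
theorem projection_underfit_lower_bound {p : ℕ}
    (β βh : Fin p → ℝ) (hβ : β ≠ 0) (hβh : βh ≠ 0)
    (K : Finset (Fin p)) (hK : ∀ k ∈ K, βh k = 0) :
    2 * (l2 (vres K β)) ^ 2 / (l2 β) ^ 2 - (l2 (vres K β)) ^ 4 / (l2 β) ^ 4 ≤
      (frob (proj βh - proj β)) ^ 2 := by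
  set a : ℝ := ∑ k, (β k) ^ 2 with ha_def
  set b : ℝ := ∑ k, (βh k) ^ 2 with hb_def
  set t : ℝ := ∑ k, (vres K β k) ^ 2 with ht_def
  set s : ℝ := ∑ k, βh k * β k with hs_def
  have ha : 0 < a := sum_sq_pos_of_ne_zero hβ
  have hb : 0 < b := sum_sq_pos_of_ne_zero hβh
  have ht : 0 ≤ t := Finset.sum_nonneg fun k _ => sq_nonneg _
  -- t ≤ a
  have hta : t ≤ a := by
    apply Finset.sum_le_sum
    intro k _
    by_cases h : k ∈ K <;> simp [vres, h, sq_nonneg]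
  -- Cauchy-Schwarz: s^2 ≤ b * (a - t)
  have hat : a - t = ∑ k, (if k ∈ K then (0:ℝ) else β k) ^ 2 := by
    rw [ha_def, ht_def, ← Finset.sum_sub_distrib]
    apply Finset.sum_congr rfl
    intro k _
    by_cases h : k ∈ K <;> simp [vres, h]
  have hs_eq : s = ∑ k, βh k * (if k ∈ K then (0:ℝ) else β k) := by
    apply Finset.sum_congr rfl
    intro k _
    by_cases h : k ∈ K <;> simp [h, hK k]
  have hCS : s ^ 2 ≤ b * (a - t) := by
    rw [hs_eq, hat]
    exact Finset.sum_mul_sq_le_sq_mul_sq univ _ _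
  -- Frobenius norm computation
  have hdot_b : βh ⬝ᵥ βh = b := by
    simp [dotProduct, hb_def, sq]
  have hdot_a : β ⬝ᵥ β = a := by
    simp [dotProduct, ha_def, sq]
  have hfrob : (frob (proj βh - proj β)) ^ 2 = 2 - 2 * s ^ 2 / (a * b) := by
    have h1 : (frob (proj βh - proj β)) ^ 2
        = ∑ i, ∑ j, ((proj βh - proj β) i j) ^ 2 := by
      rw [frob, Real.sq_sqrt]
      exact Finset.sum_nonneg fun i _ => Finset.sum_nonneg fun j _ => sq_nonneg _
    rw [h1]
    have h2 : ∀ i j : Fin p, ((proj βh - proj β) i j) ^ 2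
        = b⁻¹ ^ 2 * βh i ^ 2 * βh j ^ 2
          - 2 * (b⁻¹ * a⁻¹) * (βh i * β i) * (βh j * β j)
          + a⁻¹ ^ 2 * β i ^ 2 * β j ^ 2 := by
      intro i j
      simp only [proj, hdot_b, hdot_a, Matrix.sub_apply, Matrix.smul_apply,
        Matrix.vecMulVec_apply, smul_eq_mul]
      ring
    simp only [h2]
    have h3 : ∀ i : Fin p, ∑ j, (b⁻¹ ^ 2 * βh i ^ 2 * βh j ^ 2
          - 2 * (b⁻¹ * a⁻¹) * (βh i * β i) * (βh j * β j)
          + a⁻¹ ^ 2 * β i ^ 2 * β j ^ 2)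
        = b⁻¹ ^ 2 * βh i ^ 2 * b
          - 2 * (b⁻¹ * a⁻¹) * (βh i * β i) * s
          + a⁻¹ ^ 2 * β i ^ 2 * a := by
      intro i
      rw [Finset.sum_add_distrib, Finset.sum_sub_distrib, ← Finset.mul_sum,
        ← Finset.mul_sum, ← Finset.mul_sum]
    simp only [h3]
    rw [Finset.sum_add_distrib, Finset.sum_sub_distrib, ← Finset.sum_mul,
      ← Finset.sum_mul, ← Finset.sum_mul, ← Finset.mul_sum, ← Finset.mul_sum,
      ← Finset.mul_sum]
    field_simp
    ring
  rw [hfrob, l2_sq, l2_sq]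
  have h4 : (l2 β) ^ 4 = a ^ 2 := by
    have := l2_sq β
    nlinarith [this]
  rw [show (l2 (vres K β))^4 = ((l2 (vres K β))^2)^2 by ring, l2_sq, h4, ← ht_def]
  -- goal: 2*t/a - t^2/a^2 ≤ 2 - 2*s^2/(a*b)
  have key : 2 * s ^ 2 / (a * b) ≤ 2 * (a - t) / a := by
    rw [div_le_div_iff₀ (by positivity) ha]
    nlinarith [hCS]
  have : 2 - 2 * s ^ 2 / (a * b) ≥ 2 * t / a := by
    have h5 : 2 * (a - t) / a = 2 - 2 * t / a := by field_simp
    nlinarith [key, h5]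
  nlinarith [this, sq_nonneg (t / a), sq_nonneg t, ha, div_nonneg (sq_nonneg t) (sq_nonneg a)]
end
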